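/- arXiv:0802.2338 — 2 statements merged into one kernel-verified Lean document; each statement's English description precedes it below -/
import Mathlib

section
/- Let G be a group with elements Γ_1, Γ_3, Γ_9, Γ_16, Γ_21 satisfying: [Γ_9,Γ_16] = [Γ_3,Γ_9] = 1, the triple relations ⟨Γ_1,Γ_9⟩ = ⟨Γ_9,Γ_21⟩ = ⟨Γ_3,Γ_16⟩ = ⟨Γ_21,Γ_3⟩ = 1, the commutation [Γ_16,Γ_21] = 1, and Γ_1 = Γ_9^{-1}Γ_21 Γ_16 Γ_3 Γ_16^{-1} Γ_21^{-1} Γ_9. Then ⟨Γ_16, Γ_1⟩ = 1. -/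
/-- Conjugating a braid relation by an element commuting with `y`. -/
lemma braid_conj {G : Type*} [Group G] (a x y : G) (h : a * y = y * a)
    (hb : x * y * x = y * x * y) :
    y * (a * x * a⁻¹) * y = (a * x * a⁻¹) * y * (a * x * a⁻¹) := by
  have hc : Commute a y := h
  have h' : y * a⁻¹ = a⁻¹ * y := (hc.inv_left.eq).symm
  calc y * (a * x * a⁻¹) * y
      = (y * a) * (x * (a⁻¹ * y)) := by group
    _ = (a * y) * (x * (y * a⁻¹)) := by rw [← h, h']
    _ = a * (y * x * y) * a⁻¹ := by group
    _ = a * (x * y * x) * a⁻¹ := by rw [hb]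
    _ = (a * x) * (a⁻¹ * y * a) * (x * a⁻¹) := by
        rw [show a⁻¹ * y * a = y from by rw [← h', mul_assoc, inv_mul_cancel, mul_one]]
        group
    _ = (a * x * a⁻¹) * y * (a * x * a⁻¹) := by group

/-- Step 5 of Proposition 4.1: from the listed local relations one deduces the
triple relation `⟨Γ₁₆, Γ₁⟩ = 1`, i.e. `Γ₁₆ Γ₁ Γ₁₆ = Γ₁ Γ₁₆ Γ₁`. -/
theorem step5_triple_relation {G : Type*} [Group G] (g1 g3 g9 g16 g21 : G)
    (h916 : g9 * g16 = g16 * g9) (h39 : g3 * g9 = g9 * g3)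
    (t19 : g1 * g9 * g1 = g9 * g1 * g9)
    (t921 : g9 * g21 * g9 = g21 * g9 * g21)
    (t316 : g3 * g16 * g3 = g16 * g3 * g16)
    (t213 : g21 * g3 * g21 = g3 * g21 * g3)
    (h1621 : g16 * g21 = g21 * g16)
    (h1 : g1 = g9⁻¹ * g21 * g16 * g3 * g16⁻¹ * g21⁻¹ * g9) :
    g16 * g1 * g16 = g1 * g16 * g1 := by
  set a := g9⁻¹ * g21 * g16 with ha
  have h1' : g1 = a * g3 * a⁻¹ := by rw [h1, ha]; group
  have hcomm : a * g16 = g16 * a := by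
    have h9 : g9⁻¹ * g16 = g16 * g9⁻¹ := (show Commute g9 g16 from h916).inv_left.eq
    calc a * g16 = g9⁻¹ * (g21 * g16) * g16 := by rw [ha]; group
      _ = g9⁻¹ * (g16 * g21) * g16 := by rw [h1621]
      _ = (g9⁻¹ * g16) * (g21 * g16) := by group
      _ = (g16 * g9⁻¹) * (g21 * g16) := by rw [h9]
      _ = g16 * a := by rw [ha]; group
  rw [h1']
  exact braid_conj a g3 g16 hcomm t316
end

section
/- Let G be a group with elements Γ_1, Γ_3, Γ_9, Γ_16, Γ_21 satisfying [Γ_9,Γ_16]=[Γ_9,Γ_3]=1, ⟨Γ_3,Γ_16⟩=1, ⟨Γ_3',Γ_21⟩=1 with Γ_3' = Γ_3, [Γ_16,Γ_21]=1, Γ_1 = (Γ_16 Γ_21)^{-1} conjugate of Γ_3 as Γ_1 = Γ_9^{-1} Γ_21 Γ_16 Γ_3 Γ_16^{-1} Γ_21^{-1} Γ_9, and the relation [Γ_16, Γ_3 Γ_3 Γ_21 Γ_3^{-1} Γ_3^{-1}] = 1. Then [Γ_3, Γ_1] = 1. -/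
/-!
Since `Γ₉` commutes with `Γ₃`, it suffices that `Γ₃` commutes with `x = (Γ₂₁Γ₁₆) Γ₃ (Γ₂₁Γ₁₆)⁻¹`.
The braid relations rewrite `x` as the conjugate of `Γ₁₆` by `k = Γ₂₁Γ₃⁻¹`, and `k⁻¹ Γ₃ k` as
`Γ₃² Γ₂₁ Γ₃⁻²`; so the commutation of `Γ₃` with `x` is, after conjugating by `k⁻¹`, exactly the
relation `[Γ₁₆, Γ₃² Γ₂₁ Γ₃⁻²] = 1`.
-/

section Braid

variable {G : Type*} [Group G]

theorem mul_mul_inv_eq_inv_mul_mul_of_braid {a b : G} (h : a * b * a = b * a * b) :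
    a * b * a⁻¹ = b⁻¹ * a * b :=
  calc a * b * a⁻¹ = b⁻¹ * (b * a * b) * a⁻¹ := by group
    _ = b⁻¹ * (a * b * a) * a⁻¹ := by rw [h]
    _ = b⁻¹ * a * b := by group

theorem commute_conj_iff_of_braid {a b c : G} (hab : a * b * a = b * a * b)
    (hac : a * c * a = c * a * c) :
    Commute a (c * b * a * (c * b)⁻¹) ↔ Commute b (a * a * c * a⁻¹ * a⁻¹) := by
  have hx : c * b * a * (c * b)⁻¹ = (c * a⁻¹) * b * (c * a⁻¹)⁻¹ :=
    calc c * b * a * (c * b)⁻¹ = c * (b * a * b⁻¹) * c⁻¹ := by group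
      _ = c * (a⁻¹ * b * a) * c⁻¹ := by rw [mul_mul_inv_eq_inv_mul_mul_of_braid hab.symm]
      _ = (c * a⁻¹) * b * (c * a⁻¹)⁻¹ := by group
  have ha : (c * a⁻¹) * (a * a * c * a⁻¹ * a⁻¹) * (c * a⁻¹)⁻¹ = a :=
    calc (c * a⁻¹) * (a * a * c * a⁻¹ * a⁻¹) * (c * a⁻¹)⁻¹ = c * (a * c * a⁻¹) * c⁻¹ := by group
      _ = c * (c⁻¹ * a * c) * c⁻¹ := by rw [mul_mul_inv_eq_inv_mul_mul_of_braid hac]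
      _ = a := by group
  have hconj := Commute.conj_iff (c * a⁻¹) (a := a * a * c * a⁻¹ * a⁻¹) (b := b)
  rw [ha] at hconj
  rw [hx, hconj, Commute.symm_iff]

end Braid

theorem step6_commutation_general {G : Type*} [Group G] (g1 g3 g9 g16 g21 : G)
    (h93 : g9 * g3 = g3 * g9)
    (t316 : g3 * g16 * g3 = g16 * g3 * g16)
    (t321 : g3 * g21 * g3 = g21 * g3 * g21)
    (h1 : g1 = g9⁻¹ * g21 * g16 * g3 * g16⁻¹ * g21⁻¹ * g9)
    (hrel : g16 * (g3 * g3 * g21 * g3⁻¹ * g3⁻¹)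
          = (g3 * g3 * g21 * g3⁻¹ * g3⁻¹) * g16) :
    g3 * g1 = g1 * g3 := by
  have hx : Commute g3 (g21 * g16 * g3 * (g21 * g16)⁻¹) :=
    (commute_conj_iff_of_braid t316 t321).2 hrel
  have h9 : Commute g3 g9 := Commute.symm h93
  have hg1 : g1 = g9⁻¹ * (g21 * g16 * g3 * (g21 * g16)⁻¹) * g9 := by rw [h1]; group
  rw [hg1]
  exact (h9.inv_right.mul_right hx).mul_right h9

/-- Step 6 of Proposition 4.1: the commutation `[Γ₃, Γ₁] = 1` follows from the
listed local relations. -/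
theorem step6_commutation {G : Type*} [Group G] (g1 g3 g9 g16 g21 : G)
    (h916 : g9 * g16 = g16 * g9) (h93 : g9 * g3 = g3 * g9)
    (t316 : g3 * g16 * g3 = g16 * g3 * g16)
    (t321 : g3 * g21 * g3 = g21 * g3 * g21)
    (h1621 : g16 * g21 = g21 * g16)
    (h1 : g1 = g9⁻¹ * g21 * g16 * g3 * g16⁻¹ * g21⁻¹ * g9)
    (hrel : g16 * (g3 * g3 * g21 * g3⁻¹ * g3⁻¹)
          = (g3 * g3 * g21 * g3⁻¹ * g3⁻¹) * g16) :
    g3 * g1 = g1 * g3 :=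
  step6_commutation_general g1 g3 g9 g16 g21 h93 t316 t321 h1 hrel
end
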